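/- Let W be the static response matrix of a spring network in ℝ^d (d = 2 or 3) with n terminal nodes at positions x_1,…,x_n. Then W is a real symmetric positive semidefinite nd×nd matrix, and every column of W, regarded as a system of forces f_1,…,f_n ∈ ℝ^d supported at the points x_1,…,x_n, is a balanced system of forces. -/

import Mathlib

open scoped BigOperators
open Matrix

noncomputable section

/-- The Moore–Penrose pseudoinverse of a real square matrix, characterized by the
four Penrose conditions (it exists and is unique for every real matrix). -/
noncomputable def mpinv {n : Type*} [Fintype n] [DecidableEq n]
    (A : Matrix n n ℝ) : Matrix n n ℝ :=
  @dite _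
    (∃ X : Matrix n n ℝ,
      A * X * A = A ∧ X * A * X = X ∧ (A * X)ᵀ = A * X ∧ (X * A)ᵀ = X * A)
    (Classical.propDecidable _) (fun h => h.choose) (fun _ => 0)

/-- Euclidean norm of a vector in `Fin d → ℝ`. -/
noncomputable def enorm {d : ℕ} (v : Fin d → ℝ) : ℝ := Real.sqrt (∑ a, v a ^ 2)

/-- Unit vector pointing from `p` towards `q`. -/
noncomputable def unitDir {d : ℕ} (p q : Fin d → ℝ) : Fin d → ℝ :=
  fun a => (_root_.enorm (q - p))⁻¹ * (q a - p a)

/-- Stiffness matrix of a spring network with node positions `x` and spring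
constants `k`: the `d × d` off-diagonal block coupling nodes `i ≠ j` is
`-k i j • n_{ij} n_{ij}ᵀ` and the `i`-th diagonal block is
`∑ j ≠ i, k i j • n_{ij} n_{ij}ᵀ`. -/
noncomputable def stiffness {d : ℕ} {ι : Type*} [Fintype ι] [DecidableEq ι]
    (x : ι → Fin d → ℝ) (k : ι → ι → ℝ) :
    Matrix (ι × Fin d) (ι × Fin d) ℝ :=
  Matrix.of fun p q =>
    if p.1 = q.1 then
      ∑ j ∈ Finset.univ.filter (fun j => j ≠ p.1),
        k p.1 j * (unitDir (x p.1) (x j) p.2 * unitDir (x p.1) (x j) q.2)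
    else
      -(k p.1 q.1 * (unitDir (x p.1) (x q.1) p.2 * unitDir (x p.1) (x q.1) q.2))

/-- `(x, k)` is a spring network: nodes are at distinct positions and the spring
constants are symmetric and nonnegative. -/
def IsSpringNetwork {d : ℕ} {ι : Type*} (x : ι → Fin d → ℝ) (k : ι → ι → ℝ) : Prop :=
  Function.Injective x ∧ (∀ i j, k i j = k j i) ∧ (∀ i j, 0 ≤ k i j)

/-- The block of a matrix indexed by `(nodes × Fin d)` selected by the node
maps `f` and `g`. -/
def blk {d : ℕ} {ι κ₁ κ₂ : Type*} (K : Matrix (ι × Fin d) (ι × Fin d) ℝ)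
    (f : κ₁ → ι) (g : κ₂ → ι) : Matrix (κ₁ × Fin d) (κ₂ × Fin d) ℝ :=
  K.submatrix (Prod.map f id) (Prod.map g id)

/-- Generalized Schur complement `K_BB - K_BI K_II† K_IB` eliminating the
interior nodes `I`. -/
noncomputable def schurResp {d : ℕ} {B I : Type*} [Fintype B] [Fintype I]
    [DecidableEq B] [DecidableEq I]
    (K : Matrix ((B ⊕ I) × Fin d) ((B ⊕ I) × Fin d) ℝ) :
    Matrix (B × Fin d) (B × Fin d) ℝ :=
  blk K Sum.inl Sum.inl -
    blk K Sum.inl Sum.inr * mpinv (blk K Sum.inr Sum.inr) * blk K Sum.inr Sum.inl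

/-- Static response matrix at the terminals `B` of the spring network `(x, k)`
with interior nodes `I`. -/
noncomputable def staticResponse {d : ℕ} {B I : Type*} [Fintype B] [Fintype I]
    [DecidableEq B] [DecidableEq I]
    (x : (B ⊕ I) → Fin d → ℝ) (k : (B ⊕ I) → (B ⊕ I) → ℝ) :
    Matrix (B × Fin d) (B × Fin d) ℝ :=
  schurResp (stiffness x k)

/-- Balanced system of forces `f` supported at the points `x`: the total force
vanishes and the total torque vanishes (the torque being recorded as the
antisymmetric matrix `x_i ∧ f_i`, which for `d = 2` is equivalent to the scalar
wedge `u ∧ v = u 0 * v 1 - u 1 * v 0` and for `d = 3` to the cross product). -/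
def IsBalanced {d : ℕ} {ι : Type*} [Fintype ι]
    (x f : ι → Fin d → ℝ) : Prop :=
  (∀ a, ∑ i, f i a = 0) ∧ ∀ a b, ∑ i, (x i a * f i b - x i b * f i a) = 0

/-- Planar wedge product. -/
def wedge2 (u v : Fin 2 → ℝ) : ℝ := u 0 * v 1 - u 1 * v 0

/-- Cross product in `ℝ³`. -/
def cross3 (u v : Fin 3 → ℝ) : Fin 3 → ℝ :=
  ![u 1 * v 2 - u 2 * v 1, u 2 * v 0 - u 0 * v 2, u 0 * v 1 - u 1 * v 0]

/-- The `ε`-neighborhood `{y | dist (y, C) ≤ ε}` of a set `C` (for a closed set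
`C`, membership is equivalent to being within Euclidean distance `ε` of some
point of `C`). -/
def epsNbhd {d : ℕ} (C : Set (Fin d → ℝ)) (ε : ℝ) : Set (Fin d → ℝ) :=
  {y | ∃ z ∈ C, _root_.enorm (y - z) ≤ ε}

/-- Combine terminal and interior displacements into a displacement of all
nodes. -/
def glue {d : ℕ} {B I : Type*} (uB : B × Fin d → ℝ) (uI : I × Fin d → ℝ) :
    (B ⊕ I) × Fin d → ℝ :=
  fun p => Sum.elim (fun b => uB (b, p.2)) (fun i => uI (i, p.2)) p.1

/-- The reduced stiffness matrix `K̃` at the nodes `B ⊕ J` of a spring–mass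
network with massless interior nodes `L`, obtained by eliminating `L`. -/
noncomputable def dynKtilde {d : ℕ} {B J L : Type*} [Fintype B] [Fintype J] [Fintype L]
    [DecidableEq B] [DecidableEq J] [DecidableEq L]
    (x : ((B ⊕ J) ⊕ L) → Fin d → ℝ) (k : ((B ⊕ J) ⊕ L) → ((B ⊕ J) ⊕ L) → ℝ) :
    Matrix ((B ⊕ J) × Fin d) ((B ⊕ J) × Fin d) ℝ :=
  schurResp (stiffness x k)

/-- The diagonal mass matrix `M_JJ` of the interior nodes with mass. -/
noncomputable def massJJ {d : ℕ} {B J L : Type*} [Fintype J] [DecidableEq J]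
    (m : (B ⊕ J) ⊕ L → ℝ) : Matrix (J × Fin d) (J × Fin d) ℝ :=
  Matrix.diagonal fun p => m (Sum.inl (Sum.inr p.1))

/-- The diagonal mass matrix `M_BB` of the terminal nodes. -/
noncomputable def massBB {d : ℕ} {B J L : Type*} [Fintype B] [DecidableEq B]
    (m : (B ⊕ J) ⊕ L → ℝ) : Matrix (B × Fin d) (B × Fin d) ℝ :=
  Matrix.diagonal fun p => m (Sum.inl (Sum.inl p.1))

/-- Dynamic response function
`W(ω) = K̃_BB - ω² M_BB - K̃_BJ (K̃_JJ - ω² M_JJ)⁻¹ K̃_JB` of a spring–mass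
network with terminals `B`, interior nodes `J` carrying the masses `m` and
massless interior nodes `L`. -/
noncomputable def dynResponse {d : ℕ} {B J L : Type*} [Fintype B] [Fintype J] [Fintype L]
    [DecidableEq B] [DecidableEq J] [DecidableEq L]
    (x : ((B ⊕ J) ⊕ L) → Fin d → ℝ) (k : ((B ⊕ J) ⊕ L) → ((B ⊕ J) ⊕ L) → ℝ)
    (m : (B ⊕ J) ⊕ L → ℝ) (ω : ℝ) : Matrix (B × Fin d) (B × Fin d) ℝ :=
  blk (dynKtilde x k) Sum.inl Sum.inl - ω ^ 2 • massBB m -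
    blk (dynKtilde x k) Sum.inl Sum.inr *
      (blk (dynKtilde x k) Sum.inr Sum.inr - ω ^ 2 • massJJ m)⁻¹ *
      blk (dynKtilde x k) Sum.inr Sum.inl

/-! The stiffness matrix is `K = ½ ∑ᵢⱼ kᵢⱼ eᵢⱼ eᵢⱼᵀ` with `eᵢⱼ = (δᵢ - δⱼ) ⊗ nᵢⱼ`, so it is
positive semidefinite and it annihilates every infinitesimal rigid motion, since translations
and rotations are orthogonal to each `eᵢⱼ`.

For a positive semidefinite block matrix `M = [[A, B], [Bᵀ, D]]` and `v ∈ ker D`, the vector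
`(0, v)` is isotropic for `M`, hence lies in `ker M`; so `ker D ⊆ ker B` and `B D† D = B`.
Extending `y` by `-D† Bᵀ y` therefore gives a vector that `M` maps to `(S y, 0)`, where
`S = A - B D† Bᵀ`. This shows both that `S` is positive semidefinite and that `S` annihilates
the terminal part of every vector in `ker M`. Applied to `K`, this says that every column of
the symmetric matrix `W` does no work along any rigid motion of the terminals, which is the
balance of forces and of torques. -/

namespace Matrix

section MoorePenrose

variable {m : Type*} [Fintype m]

def IsMoorePenroseInverse (A X : Matrix m m ℝ) : Prop :=
  A * X * A = A ∧ X * A * X = X ∧ (A * X)ᵀ = A * X ∧ (X * A)ᵀ = X * A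

namespace IsMoorePenroseInverse

variable {A X Y : Matrix m m ℝ}

theorem unique (hX : IsMoorePenroseInverse A X) (hY : IsMoorePenroseInverse A Y) : X = Y := by
  obtain ⟨hX₁, hX₂, hX₃, hX₄⟩ := hX
  obtain ⟨hY₁, hY₂, hY₃, hY₄⟩ := hY
  have hAX : A * X = A * Y :=
    calc A * X = (A * Y * A * X)ᵀ := by rw [hY₁, hX₃]
      _ = (A * X)ᵀ * (A * Y)ᵀ := by simp only [transpose_mul, Matrix.mul_assoc]
      _ = A * Y := by rw [hX₃, hY₃, ← Matrix.mul_assoc, hX₁]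
  have hXA : X * A = Y * A :=
    calc X * A = (X * A * Y * A)ᵀ := by
          rw [Matrix.mul_assoc (X * A), Matrix.mul_assoc X, ← Matrix.mul_assoc A, hY₁, hX₄]
      _ = (Y * A)ᵀ * (X * A)ᵀ := by simp only [transpose_mul, Matrix.mul_assoc]
      _ = Y * A := by rw [hX₄, hY₄, Matrix.mul_assoc, ← Matrix.mul_assoc A, hX₁]
  calc X = X * A * X := hX₂.symm
    _ = Y * A * Y := by rw [hXA, Matrix.mul_assoc, hAX, ← Matrix.mul_assoc]
    _ = Y := hY₂

theorem transpose (h : IsMoorePenroseInverse A X) : IsMoorePenroseInverse Aᵀ Xᵀ := by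
  obtain ⟨h₁, h₂, h₃, h₄⟩ := h
  refine ⟨?_, ?_, ?_, ?_⟩
  · rw [← transpose_mul, ← transpose_mul, ← Matrix.mul_assoc, h₁]
  · rw [← transpose_mul, ← transpose_mul, ← Matrix.mul_assoc, h₂]
  · rw [← transpose_mul, transpose_transpose, h₄]
  · rw [← transpose_mul, transpose_transpose, h₃]

variable [DecidableEq m]

/-- Here `e⁻¹` is entrywise, with `0⁻¹ = 0`. -/
theorem diagonal (e : m → ℝ) :
    IsMoorePenroseInverse (diagonal e) (diagonal e⁻¹) := by
  refine ⟨?_, ?_, ?_, ?_⟩ <;> simp only [diagonal_mul_diagonal, diagonal_transpose]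
  · simp
  · simpa using congrArg Matrix.diagonal (funext fun i => mul_inv_mul_cancel (e i)⁻¹)

theorem conj {U : Matrix m m ℝ} (hU : U ∈ unitaryGroup m ℝ) (h : IsMoorePenroseInverse A X) :
    IsMoorePenroseInverse (U * A * Uᵀ) (U * X * Uᵀ) := by
  have hUU : Uᵀ * U = 1 := by
    simpa [star_eq_conjTranspose, conjTranspose_eq_transpose_of_trivial] using
      mem_unitaryGroup_iff'.mp hU
  have conj_mul : ∀ M N : Matrix m m ℝ, U * M * Uᵀ * (U * N * Uᵀ) = U * (M * N) * Uᵀ := by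
    intro M N
    simp only [Matrix.mul_assoc, ← Matrix.mul_assoc Uᵀ U, hUU, Matrix.one_mul]
  obtain ⟨h₁, h₂, h₃, h₄⟩ := h
  refine ⟨?_, ?_, ?_, ?_⟩
  · rw [conj_mul, conj_mul, h₁]
  · rw [conj_mul, conj_mul, h₂]
  · rw [conj_mul, transpose_mul, transpose_mul, h₃, transpose_transpose]
    simp only [Matrix.mul_assoc]
  · rw [conj_mul, transpose_mul, transpose_mul, h₄, transpose_transpose]
    simp only [Matrix.mul_assoc]

end IsMoorePenroseInverse

variable [DecidableEq m]

theorem IsSymm.exists_isMoorePenroseInverse {A : Matrix m m ℝ} (hA : A.IsSymm) :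
    ∃ X, IsMoorePenroseInverse A X := by
  have hH : A.IsHermitian := isHermitian_iff_isSymm.mpr hA
  set U : Matrix m m ℝ := (hH.eigenvectorUnitary : Matrix m m ℝ)
  have hspec : A = U * diagonal hH.eigenvalues * Uᵀ := by
    simpa [U, star_eq_conjTranspose, conjTranspose_eq_transpose_of_trivial] using
      hH.spectral_theorem
  have h := IsMoorePenroseInverse.conj hH.eigenvectorUnitary.2 (.diagonal hH.eigenvalues)
  rw [← hspec] at h
  exact ⟨_, h⟩

theorem IsSymm.isMoorePenroseInverse_mpinv {A : Matrix m m ℝ} (hA : A.IsSymm) :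
    IsMoorePenroseInverse A (mpinv A) := by
  have h := hA.exists_isMoorePenroseInverse
  rw [show mpinv A = h.choose from dif_pos h]
  exact h.choose_spec

theorem IsSymm.mpinv {A : Matrix m m ℝ} (hA : A.IsSymm) : (mpinv A).IsSymm := by
  have h := hA.isMoorePenroseInverse_mpinv.transpose
  rw [hA.eq] at h
  exact h.unique hA.isMoorePenroseInverse_mpinv

end MoorePenrose

section SchurComplement

variable {m p : Type*} [Fintype m] [Fintype p] {A : Matrix m m ℝ} {B : Matrix m p ℝ}
  {C : Matrix p m ℝ} {D X : Matrix p p ℝ}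

theorem PosSemidef.fromBlocks₁₂_mulVec_eq_zero (hM : (fromBlocks A B C D).PosSemidef)
    {v : p → ℝ} (hv : D *ᵥ v = 0) : B *ᵥ v = 0 := by
  have hq : star (0 ⊕ᵥ v) ⬝ᵥ (fromBlocks A B C D *ᵥ (0 ⊕ᵥ v)) = 0 := by
    simp [fromBlocks_mulVec, dotProduct_block, hv]
  funext i
  simpa [fromBlocks_mulVec] using congrFun ((hM.dotProduct_mulVec_zero_iff _).mp hq) (.inl i)

theorem PosSemidef.fromBlocks₁₂_mul_mul_eq (hM : (fromBlocks A B C D).PosSemidef)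
    (hX : D * X * D = D) : B * X * D = B := by
  refine ext_iff_mulVec.mpr fun v => ?_
  have hker : D *ᵥ (v - X *ᵥ (D *ᵥ v)) = 0 := by
    rw [mulVec_sub, mulVec_mulVec, mulVec_mulVec, hX, sub_self]
  have h := hM.fromBlocks₁₂_mulVec_eq_zero hker
  rw [mulVec_sub, sub_eq_zero] at h
  rw [h, mulVec_mulVec, mulVec_mulVec]

theorem PosSemidef.schur_mulVec_eq_zero (hM : (fromBlocks A B C D).PosSemidef)
    (hX : D * X * D = D) {u : m → ℝ} {v : p → ℝ}
    (h : fromBlocks A B C D *ᵥ (u ⊕ᵥ v) = 0) : (A - B * X * C) *ᵥ u = 0 := by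
  rw [fromBlocks_mulVec, ← Sum.elim_zero_zero, Sum.elim_eq_iff] at h
  obtain ⟨h₁, h₂⟩ := h
  have hCu : C *ᵥ u = -(D *ᵥ v) := eq_neg_of_add_eq_zero_left h₂
  calc (A - B * X * C) *ᵥ u = A *ᵥ u + (B * X * D) *ᵥ v := by
        rw [sub_mulVec, ← mulVec_mulVec, hCu, mulVec_neg, mulVec_mulVec, sub_neg_eq_add]
    _ = 0 := by rw [hM.fromBlocks₁₂_mul_mul_eq hX]; exact h₁

theorem PosSemidef.schur (hM : (fromBlocks A B C D).PosSemidef) (hX : D * X * D = D)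
    (hXs : X.IsSymm) : (A - B * X * C).PosSemidef := by
  obtain ⟨hA, hBC, hCB, hD⟩ := isHermitian_fromBlocks_iff.mp hM.isHermitian
  rw [conjTranspose_eq_transpose_of_trivial] at hBC hCB
  rw [isHermitian_iff_isSymm] at hA hD
  have hDXC : D * X * C = C := by
    rw [← hBC, ← hD.eq, ← hXs.eq, ← transpose_mul, ← transpose_mul, ← Matrix.mul_assoc,
      hM.fromBlocks₁₂_mul_mul_eq hX]
  have hSymm : (A - B * X * C).IsSymm := by
    rw [IsSymm, transpose_sub, transpose_mul, transpose_mul, hA.eq, hXs.eq, hCB, ← hBC,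
      Matrix.mul_assoc]
  refine .of_dotProduct_mulVec_nonneg (isHermitian_iff_isSymm.mpr hSymm) fun y => ?_
  have hblock :
      fromBlocks A B C D *ᵥ (y ⊕ᵥ -((X * C) *ᵥ y)) = ((A - B * X * C) *ᵥ y) ⊕ᵥ 0 := by
    simp only [fromBlocks_mulVec, Sum.elim_comp_inl, Sum.elim_comp_inr, mulVec_neg, mulVec_mulVec,
      ← Matrix.mul_assoc, hDXC, add_neg_cancel, sub_mulVec, ← sub_eq_add_neg]
  simpa [hblock, dotProduct_block] using hM.dotProduct_mulVec_nonneg (y ⊕ᵥ -((X * C) *ᵥ y))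

end SchurComplement

end Matrix

section SchurResp

variable {d : ℕ} {B I : Type*}

theorem submatrix_sumProdDistrib_symm_eq_fromBlocks
    (K : Matrix ((B ⊕ I) × Fin d) ((B ⊕ I) × Fin d) ℝ) :
    K.submatrix (Equiv.sumProdDistrib B I (Fin d)).symm (Equiv.sumProdDistrib B I (Fin d)).symm =
      fromBlocks (blk K .inl .inl) (blk K .inl .inr) (blk K .inr .inl) (blk K .inr .inr) := by
  ext (⟨i, a⟩ | ⟨i, a⟩) (⟨j, b⟩ | ⟨j, b⟩) <;> rfl

theorem Matrix.PosSemidef.fromBlocks_blk {K : Matrix ((B ⊕ I) × Fin d) ((B ⊕ I) × Fin d) ℝ}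
    (hK : K.PosSemidef) : (fromBlocks (blk K .inl .inl) (blk K .inl .inr)
      (blk K .inr .inl) (blk K .inr .inr)).PosSemidef :=
  submatrix_sumProdDistrib_symm_eq_fromBlocks K ▸ hK.submatrix _

variable [Fintype B] [Fintype I] [DecidableEq B] [DecidableEq I]
  {K : Matrix ((B ⊕ I) × Fin d) ((B ⊕ I) × Fin d) ℝ}

theorem posSemidef_schurResp (hK : K.PosSemidef) : (schurResp K).PosSemidef := by
  have hD : (blk K .inr .inr).IsSymm := (isHermitian_iff_isSymm.mp hK.isHermitian).submatrix _
  exact hK.fromBlocks_blk.schur hD.isMoorePenroseInverse_mpinv.1 hD.mpinv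

theorem schurResp_mulVec_eq_zero (hK : K.PosSemidef) {r : (B ⊕ I) × Fin d → ℝ}
    (hr : K *ᵥ r = 0) : schurResp K *ᵥ (fun p => r (.inl p.1, p.2)) = 0 := by
  have hD : (blk K .inr .inr).IsSymm := (isHermitian_iff_isSymm.mp hK.isHermitian).submatrix _
  refine hK.fromBlocks_blk.schur_mulVec_eq_zero hD.isMoorePenroseInverse_mpinv.1
    (v := fun p => r (.inr p.1, p.2)) ?_
  have hr' : ((fun p => r (.inl p.1, p.2)) ⊕ᵥ (fun p => r (.inr p.1, p.2))) ∘
      Equiv.sumProdDistrib B I (Fin d) = r := by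
    funext ⟨s, a⟩
    cases s <;> rfl
  rw [← submatrix_sumProdDistrib_symm_eq_fromBlocks, submatrix_mulVec_equiv, Equiv.symm_symm, hr',
    hr]
  rfl

end SchurResp

theorem sum_sum_mul_sub_ite_mul_sub_ite {ι R : Type*} [Fintype ι] [DecidableEq ι] [CommRing R]
    (g : ι → ι → R) (hg : ∀ i j, g i j = g j i) (s t : ι) :
    ∑ i, ∑ j, g i j * (((if s = i then 1 else 0) - if s = j then 1 else 0) *
      ((if t = i then 1 else 0) - if t = j then 1 else 0)) =
      2 * ((if s = t then ∑ j, g s j else 0) - g s t) := by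
  simp only [mul_sub, mul_ite, mul_one, mul_zero, Finset.sum_sub_distrib, Finset.sum_ite_eq,
    Finset.sum_ite_irrel, Finset.sum_const_zero, Finset.mem_univ, if_true]
  rw [hg t s]
  split_ifs with hst
  · subst hst
    rw [Fintype.sum_congr _ _ fun j => hg j s]
    ring
  · ring

section RigidMotions

variable {d : ℕ} {ι : Type*}

def infinitesimalTranslation (a : Fin d) : ι × Fin d → ℝ :=
  fun p => if p.2 = a then 1 else 0

def infinitesimalRotation (x : ι → Fin d → ℝ) (a b : Fin d) : ι × Fin d → ℝ :=
  fun p => x p.1 a * (if p.2 = b then 1 else 0) - x p.1 b * (if p.2 = a then 1 else 0)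

theorem isBalanced_iff_dotProduct [Fintype ι] (x : ι → Fin d → ℝ) (F : ι × Fin d → ℝ) :
    IsBalanced x (fun i a => F (i, a)) ↔
      (∀ a, infinitesimalTranslation a ⬝ᵥ F = 0) ∧
        ∀ a b, infinitesimalRotation x a b ⬝ᵥ F = 0 := by
  simp only [IsBalanced, dotProduct, Fintype.sum_prod_type, infinitesimalTranslation,
    infinitesimalRotation, sub_mul, ite_mul, one_mul, zero_mul, mul_assoc, mul_ite, mul_zero,
    Finset.sum_sub_distrib, Fintype.sum_ite_eq']

end RigidMotions

section Stiffness

variable {d : ℕ} {ι : Type*}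

theorem unitDir_self (p : Fin d → ℝ) : unitDir p p = 0 := by
  funext a
  simp [unitDir]

theorem unitDir_swap (p q : Fin d → ℝ) : unitDir q p = -unitDir p q := by
  have hnorm : _root_.enorm (p - q) = _root_.enorm (q - p) := by
    simp only [_root_.enorm, Pi.sub_apply, ← neg_sub (q _) (p _), neg_sq]
  funext a
  simp only [unitDir, hnorm, Pi.neg_apply]
  ring

variable [Fintype ι] [DecidableEq ι]

def edgeVector (x : ι → Fin d → ℝ) (i j : ι) : ι × Fin d → ℝ :=
  fun p => ((if p.1 = i then 1 else 0) - (if p.1 = j then 1 else 0)) * unitDir (x i) (x j) p.2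

theorem edgeVector_dotProduct (x : ι → Fin d → ℝ) (i j : ι) (u : ι × Fin d → ℝ) :
    edgeVector x i j ⬝ᵥ u = ∑ b, unitDir (x i) (x j) b * (u (i, b) - u (j, b)) := by
  simp only [dotProduct, Fintype.sum_prod_type, edgeVector, sub_mul, ite_mul, one_mul, zero_mul,
    Finset.sum_sub_distrib, mul_sub]
  simp only [Finset.sum_ite_irrel, Finset.sum_const_zero, Fintype.sum_ite_eq']

theorem edgeVector_dotProduct_infinitesimalTranslation (x : ι → Fin d → ℝ) (i j : ι)
    (a : Fin d) : edgeVector x i j ⬝ᵥ infinitesimalTranslation a = 0 := by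
  simp [edgeVector_dotProduct, infinitesimalTranslation]

theorem edgeVector_dotProduct_infinitesimalRotation (x : ι → Fin d → ℝ) (i j : ι)
    (a b : Fin d) : edgeVector x i j ⬝ᵥ infinitesimalRotation x a b = 0 := by
  simp only [edgeVector_dotProduct, infinitesimalRotation, unitDir]
  simp only [mul_sub, mul_ite, mul_one, mul_zero, Finset.sum_sub_distrib, Fintype.sum_ite_eq']
  ring

theorem stiffness_eq_sum_vecMulVec (x : ι → Fin d → ℝ) (k : ι → ι → ℝ)
    (hk : ∀ i j, k i j = k j i) :
    stiffness x k = ∑ i, ∑ j, (k i j / 2) • vecMulVec (edgeVector x i j) (edgeVector x i j) := by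
  ext ⟨s, a⟩ ⟨t, b⟩
  set g : ι → ι → ℝ := fun i j => k i j / 2 * (unitDir (x i) (x j) a * unitDir (x i) (x j) b)
  have hg : ∀ i j, g i j = g j i := by
    intro i j
    simp only [g, hk i j, unitDir_swap (x i), Pi.neg_apply]
    ring
  have hentry :
      (∑ i, ∑ j, (k i j / 2) • vecMulVec (edgeVector x i j) (edgeVector x i j)) (s, a) (t, b) =
        ∑ i, ∑ j, g i j * (((if s = i then 1 else 0) - if s = j then 1 else 0) *
          ((if t = i then 1 else 0) - if t = j then 1 else 0)) := by
    simp only [Matrix.sum_apply, Matrix.smul_apply, vecMulVec_apply, edgeVector, smul_eq_mul, g]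
    refine Fintype.sum_congr _ _ fun i => Fintype.sum_congr _ _ fun j => ?_
    ring
  rw [hentry, sum_sum_mul_sub_ite_mul_sub_ite g hg]
  simp only [stiffness, of_apply]
  split_ifs with hst
  · subst hst
    rw [Finset.sum_filter_of_ne fun j _ h => by rintro rfl; simp [unitDir_self] at h]
    simp only [g, unitDir_self, Pi.zero_apply, mul_zero, sub_zero, Finset.mul_sum]
    refine Fintype.sum_congr _ _ fun j => ?_
    ring
  · simp only [g]
    ring

variable {x : ι → Fin d → ℝ} {k : ι → ι → ℝ}

theorem stiffness_posSemidef (hk : ∀ i j, k i j = k j i) (hk₀ : ∀ i j, 0 ≤ k i j) :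
    (stiffness x k).PosSemidef := by
  rw [stiffness_eq_sum_vecMulVec x k hk]
  refine posSemidef_sum _ fun i _ => posSemidef_sum _ fun j _ => ?_
  simpa using
    (posSemidef_vecMulVec_self_star (edgeVector x i j)).smul (div_nonneg (hk₀ i j) two_pos.le)

theorem stiffness_mulVec_eq_zero (hk : ∀ i j, k i j = k j i) {u : ι × Fin d → ℝ}
    (hu : ∀ i j, edgeVector x i j ⬝ᵥ u = 0) : stiffness x k *ᵥ u = 0 := by
  simp [stiffness_eq_sum_vecMulVec x k hk, sum_mulVec, smul_mulVec, vecMulVec_mulVec, hu]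

end Stiffness

theorem static_response_psd_balanced_general {d : ℕ} {n : ℕ}
    {I : Type*} [Fintype I] [DecidableEq I]
    (x : (Fin n ⊕ I) → Fin d → ℝ) (k : (Fin n ⊕ I) → (Fin n ⊕ I) → ℝ)
    (hnet : IsSpringNetwork x k) :
    (staticResponse x k)ᵀ = staticResponse x k ∧
    (staticResponse x k).PosSemidef ∧
    ∀ c : Fin n × Fin d,
      IsBalanced (fun i => x (Sum.inl i))
        (fun i a => staticResponse x k (i, a) c) := by
  obtain ⟨-, hk, hk₀⟩ := hnet
  have hK : (stiffness x k).PosSemidef := stiffness_posSemidef hk hk₀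
  have hW : (staticResponse x k).PosSemidef := posSemidef_schurResp hK
  have hWs : (staticResponse x k).IsSymm := isHermitian_iff_isSymm.mp hW.isHermitian
  have hcol : ∀ r, stiffness x k *ᵥ r = 0 → ∀ c,
      (fun p : Fin n × Fin d => r (.inl p.1, p.2)) ⬝ᵥ (fun q => staticResponse x k q c) = 0 := by
    intro r hr c
    have h : (staticResponse x k *ᵥ _) c = 0 := congrFun (schurResp_mulVec_eq_zero hK hr) c
    rw [← hWs.eq] at h
    rw [dotProduct_comm]
    exact h
  refine ⟨hWs.eq, hW, fun c => ?_⟩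
  refine (isBalanced_iff_dotProduct _ fun p => staticResponse x k p c).mpr
    ⟨fun a => hcol (infinitesimalTranslation a) ?_ c,
      fun a b => hcol (infinitesimalRotation x a b) ?_ c⟩
  · exact stiffness_mulVec_eq_zero hk fun i j =>
      edgeVector_dotProduct_infinitesimalTranslation x i j a
  · exact stiffness_mulVec_eq_zero hk fun i j =>
      edgeVector_dotProduct_infinitesimalRotation x i j a b

/-- the static response matrix is real symmetric positive
semidefinite and each of its columns is a balanced system of forces supported
at the terminal positions. -/
theorem static_response_psd_balanced {d : ℕ} (hd : d = 2 ∨ d = 3) {n : ℕ}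
    {I : Type*} [Fintype I] [DecidableEq I]
    (x : (Fin n ⊕ I) → Fin d → ℝ) (k : (Fin n ⊕ I) → (Fin n ⊕ I) → ℝ)
    (hnet : IsSpringNetwork x k) :
    (staticResponse x k)ᵀ = staticResponse x k ∧
    (staticResponse x k).PosSemidef ∧
    ∀ c : Fin n × Fin d,
      IsBalanced (fun i => x (Sum.inl i))
        (fun i a => staticResponse x k (i, a) c) :=
  static_response_psd_balanced_general x k hnet
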